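/- Let μ be a Radon measure on ℝ^d admitting (p,q) Fourier restriction with constant C, i.e. ‖f̂‖_{L^q(μ)} ≤ C‖f‖_{L^p(ℝ^d)} for all Schwartz functions f. Then there exists a constant M depending only on d, p, q, C such that μ(B(x,r)) ≤ M·r^{dq/p'} for all x ∈ ℝ^d and r > 0, where p' is the Hölder conjugate of p. -/

import Mathlib

/-!
Test the restriction inequality on the wave packet `g(v) = e(⟪v, x⟫) ψ(s v)` built from a bump `ψ`
with `|ψ̂| ≥ a` on `B(0, ε)`. Its Fourier transform `s^{-d} ψ̂((ξ - x) / s)` is at least `a s^{-d}`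
on `B(x, s ε)`, so Chebyshev's inequality gives `(a s^{-d})^q μ(B(x, s ε)) ≤ ‖ĝ‖_{L^q(μ)}^q`,
while `‖g‖_p = s^{-d/p} ‖ψ‖_p`. Restriction therefore yields
`μ(B(x, s ε)) ≤ (C ‖ψ‖_p / a)^q s^{d q (1 - 1/p)}`, and `s = r / ε` gives the claim.
-/

open MeasureTheory Metric Filter
open scoped FourierTransform ENNReal SchwartzMap

noncomputable section

/-- `ℝ^d` as a Euclidean space. -/
abbrev Euc (d : ℕ) := EuclideanSpace ℝ (Fin d)

/-- The measure `μ` admits `(p,q)` Fourier restriction with constant `C`: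
`‖f̂‖_{L^q(μ)} ≤ C ‖f‖_{L^p(ℝ^d)}` for all Schwartz functions `f`. -/
def HasRestriction {d : ℕ} (μ : Measure (Euc d)) (p q C : ℝ) : Prop :=
  ∀ f : 𝓢(Euc d, ℂ),
    eLpNorm (𝓕 (f : Euc d → ℂ)) (ENNReal.ofReal q) μ ≤
      ENNReal.ofReal C * eLpNorm (f : Euc d → ℂ) (ENNReal.ofReal p) volume

open scoped RealInnerProductSpace ContDiff Topology
open Module

section Dilation

variable {V E : Type*} [NormedAddCommGroup V] [NormedSpace ℝ V] [MeasurableSpace V] [BorelSpace V]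
  [FiniteDimensional ℝ V] [NormedAddCommGroup E] (μ : Measure V) [μ.IsAddHaarMeasure]

theorem eLpNorm_comp_smul {p : ℝ≥0∞} (hp : p ≠ ⊤) (f : V → E) {s : ℝ} (hs : s ≠ 0) :
    eLpNorm (fun v ↦ f (s • v)) p μ =
      ENNReal.ofReal |(s ^ finrank ℝ V)⁻¹| ^ p.toReal⁻¹ * eLpNorm f p μ := by
  have hemb : MeasurableEmbedding (s • · : V → V) :=
    (Homeomorph.smulOfNeZero s hs).measurableEmbedding
  rw [← Function.comp_def, ← hemb.eLpNorm_map_measure, Measure.map_addHaar_smul μ hs,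
    eLpNorm_smul_measure_of_ne_top hp, smul_eq_mul, one_div, ENNReal.toReal_inv]

end Dilation

namespace Real

variable {V E : Type*} [NormedAddCommGroup V] [InnerProductSpace ℝ V] [MeasurableSpace V]
  [BorelSpace V] [FiniteDimensional ℝ V] [NormedAddCommGroup E] [NormedSpace ℂ E]

theorem fourier_fourierChar_smul (f : V → E) (x ξ : V) :
    𝓕 (fun v ↦ 𝐞 ⟪v, x⟫ • f v) ξ = 𝓕 f (ξ - x) := by
  simp only [fourier_eq, smul_smul, ← AddChar.map_add_eq_mul, inner_sub_right, neg_sub,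
    neg_add_eq_sub]

theorem fourier_comp_smul (f : V → E) {s : ℝ} (hs : s ≠ 0) (ξ : V) :
    𝓕 (fun v ↦ f (s • v)) ξ = |(s ^ finrank ℝ V)⁻¹| • 𝓕 f (s⁻¹ • ξ) := by
  have hinner (v : V) : ⟪v, ξ⟫ = ⟪s • v, s⁻¹ • ξ⟫ := by
    rw [real_inner_smul_left, real_inner_smul_right, mul_inv_cancel_left₀ hs]
  simp only [fourier_eq, hinner]
  exact Measure.integral_comp_smul volume (fun v ↦ 𝐞 (-⟪v, s⁻¹ • ξ⟫) • f v) s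

end Real

section ModulatedDilation

variable {V E : Type*} [NormedAddCommGroup V] [InnerProductSpace ℝ V] [NormedAddCommGroup E]
  [NormedSpace ℂ E]

def modulatedDilation (ψ : V → E) (x : V) (s : ℝ) (v : V) : E := 𝐞 ⟪v, x⟫ • ψ (s • v)

theorem ContDiff.modulatedDilation {n : WithTop ℕ∞} {ψ : V → E} (hψ : ContDiff ℝ n ψ) (x : V)
    (s : ℝ) : ContDiff ℝ n (modulatedDilation ψ x s) := by
  unfold _root_.modulatedDilation
  simp only [Circle.smul_def, Real.fourierChar_apply]
  have : ContDiff ℝ n ((↑) : ℝ → ℂ) := Complex.ofRealCLM.contDiff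
  have : ContDiff ℝ n (⟪·, x⟫) := contDiff_id.inner ℝ contDiff_const
  fun_prop

theorem HasCompactSupport.modulatedDilation {ψ : V → E} (hψ : HasCompactSupport ψ) (x : V)
    {s : ℝ} (hs : s ≠ 0) : HasCompactSupport (modulatedDilation ψ x s) :=
  (hψ.comp_homeomorph (Homeomorph.smulOfNeZero s hs)).smul_left

variable [MeasurableSpace V] [BorelSpace V] [FiniteDimensional ℝ V]

theorem fourier_modulatedDilation (ψ : V → E) (x : V) {s : ℝ} (hs : s ≠ 0) (ξ : V) :
    𝓕 (modulatedDilation ψ x s) ξ = |(s ^ finrank ℝ V)⁻¹| • 𝓕 ψ (s⁻¹ • (ξ - x)) :=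
  (Real.fourier_fourierChar_smul _ x ξ).trans (Real.fourier_comp_smul ψ hs _)

theorem eLpNorm_modulatedDilation {p : ℝ≥0∞} (hp : p ≠ ⊤) (ψ : V → E) (x : V) {s : ℝ}
    (hs : s ≠ 0) :
    eLpNorm (modulatedDilation ψ x s) p volume =
      ENNReal.ofReal |(s ^ finrank ℝ V)⁻¹| ^ p.toReal⁻¹ * eLpNorm ψ p volume := by
  rw [← eLpNorm_comp_smul volume hp ψ hs]
  exact eLpNorm_congr_norm_ae (.of_forall fun v ↦ Circle.norm_smul _ _)

end ModulatedDilation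

theorem rpow_mul_measure_le_eLpNorm_rpow {α F : Type*} [MeasurableSpace α] {μ : Measure α}
    [NormedAddCommGroup F] {p : ℝ≥0∞} (hp0 : p ≠ 0) (hp : p ≠ ⊤) {f : α → F}
    (hf : AEStronglyMeasurable f μ) {s : Set α} {c : ℝ≥0∞} (hc : ∀ x ∈ s, c ≤ ‖f x‖ₑ) :
    c ^ p.toReal * μ s ≤ eLpNorm f p μ ^ p.toReal :=
  calc c ^ p.toReal * μ s ≤ c ^ p.toReal * μ {x | c ≤ ‖f x‖ₑ} := by gcongr; exact hc
    _ ≤ eLpNorm f p μ ^ p.toReal := mul_meas_ge_le_pow_eLpNorm' μ hp0 hp hf c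

theorem exists_contDiff_hasCompactSupport_le_norm_fourier {V : Type*} [NormedAddCommGroup V]
    [InnerProductSpace ℝ V] [MeasurableSpace V] [BorelSpace V] [FiniteDimensional ℝ V] :
    ∃ ψ : V → ℂ, ContDiff ℝ ∞ ψ ∧ HasCompactSupport ψ ∧
      ∃ a > 0, ∃ ε > 0, ∀ w ∈ closedBall (0 : V) ε, a ≤ ‖𝓕 ψ w‖ := by
  let φ : ContDiffBump (0 : V) := ⟨1, 2, one_pos, one_lt_two⟩
  let ψ : V → ℂ := fun v ↦ (φ v : ℂ)
  have hψ : ContDiff ℝ ∞ ψ := Complex.ofRealCLM.contDiff.comp φ.contDiff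
  have hψc : HasCompactSupport ψ := φ.hasCompactSupport.comp_left Complex.ofReal_zero
  have hψ0 : ‖𝓕 ψ 0‖ = ∫ v, φ v := by
    simp only [Real.fourier_eq, inner_zero_right, neg_zero, AddChar.map_zero_eq_one, one_smul, ψ]
    rw [integral_complex_ofReal, Complex.norm_real,
      Real.norm_of_nonneg (integral_nonneg fun _ ↦ φ.nonneg)]
  have hcont : Continuous (𝓕 ψ) :=
    VectorFourier.fourierIntegral_continuous Real.continuous_fourierChar continuous_inner
      (hψ.continuous.integrable_of_hasCompactSupport hψc)
  have hnear : ∀ᶠ w in 𝓝 0, (∫ v, φ v) / 2 < ‖𝓕 ψ w‖ :=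
    hcont.norm.continuousAt.eventually_const_lt <| by
      dsimp only
      rw [hψ0]
      exact half_lt_self φ.integral_pos
  obtain ⟨ε, hε, hball⟩ := nhds_basis_closedBall.eventually_iff.1 hnear
  exact ⟨ψ, hψ, hψc, _, half_pos φ.integral_pos, ε, hε, fun w hw ↦ (hball hw).le⟩

namespace HasRestriction

variable {d : ℕ} {μ : Measure (Euc d)} {p q C : ℝ}

theorem rpow_mul_measure_closedBall_le (hμ : HasRestriction μ p q C) (hp : 0 ≤ p) (hq : 0 < q)
    {ψ : Euc d → ℂ} (hψ : ContDiff ℝ ∞ ψ) (hψc : HasCompactSupport ψ) {a ε : ℝ}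
    (hψa : ∀ w ∈ closedBall 0 ε, a ≤ ‖𝓕 ψ w‖) (x : Euc d) {s : ℝ} (hs : 0 < s) :
    ENNReal.ofReal ((s ^ d)⁻¹ * a) ^ q * μ (closedBall x (s * ε)) ≤
      (ENNReal.ofReal C * ENNReal.ofReal (s ^ d)⁻¹ ^ p⁻¹ *
        eLpNorm ψ (ENNReal.ofReal p) volume) ^ q := by
  let g : 𝓢(Euc d, ℂ) :=
    (hψc.modulatedDilation x hs.ne').toSchwartzMap (hψ.modulatedDilation x s)
  have hg : (g : Euc d → ℂ) = modulatedDilation ψ x s := rfl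
  have hscale : |(s ^ finrank ℝ (Euc d))⁻¹| = (s ^ d)⁻¹ := by
    rw [finrank_euclideanSpace_fin, abs_of_pos (by positivity)]
  have hlow : ∀ ξ ∈ closedBall x (s * ε),
      ENNReal.ofReal ((s ^ d)⁻¹ * a) ≤ ‖𝓕 (g : Euc d → ℂ) ξ‖ₑ := by
    intro ξ hξ
    have hξ' : s⁻¹ • (ξ - x) ∈ closedBall 0 ε := by
      rw [mem_closedBall_zero_iff, norm_smul, Real.norm_of_nonneg (inv_pos.2 hs).le,
        inv_mul_le_iff₀ hs, ← dist_eq_norm]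
      exact hξ
    rw [← ofReal_norm, hg, fourier_modulatedDilation ψ x hs.ne', hscale, norm_smul,
      Real.norm_of_nonneg (by positivity)]
    gcongr
    exact hψa _ hξ'
  have hmeas : AEStronglyMeasurable (𝓕 (g : Euc d → ℂ)) μ := by
    rw [← SchwartzMap.fourier_coe]
    exact (𝓕 g).continuous.aestronglyMeasurable
  have hq' : ENNReal.ofReal q ≠ 0 := ENNReal.ofReal_ne_zero_iff.2 hq
  calc ENNReal.ofReal ((s ^ d)⁻¹ * a) ^ q * μ (closedBall x (s * ε))
      ≤ eLpNorm (𝓕 (g : Euc d → ℂ)) (ENNReal.ofReal q) μ ^ q := by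
        simpa only [ENNReal.toReal_ofReal hq.le] using
          rpow_mul_measure_le_eLpNorm_rpow hq' ENNReal.ofReal_ne_top hmeas hlow
    _ ≤ (ENNReal.ofReal C * eLpNorm (g : Euc d → ℂ) (ENNReal.ofReal p) volume) ^ q := by
        gcongr
        exact hμ g
    _ = _ := by
        rw [hg, eLpNorm_modulatedDilation ENNReal.ofReal_ne_top ψ x hs.ne', hscale,
          ENNReal.toReal_ofReal hp, mul_assoc]

theorem measure_closedBall_le (hμ : HasRestriction μ p q C) (hp : 0 < p) (hq : 0 < q)
    {ψ : Euc d → ℂ} (hψ : ContDiff ℝ ∞ ψ) (hψc : HasCompactSupport ψ) {a ε : ℝ} (ha : 0 < a)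
    (hψa : ∀ w ∈ closedBall 0 ε, a ≤ ‖𝓕 ψ w‖) {K : ℝ} (hK0 : 0 ≤ K)
    (hK : ENNReal.ofReal C * eLpNorm ψ (ENNReal.ofReal p) volume ≤ ENNReal.ofReal K)
    (x : Euc d) {s : ℝ} (hs : 0 < s) :
    μ (closedBall x (s * ε)) ≤ ENNReal.ofReal ((K / a) ^ q * s ^ (d * (1 - p⁻¹) * q)) := by
  have ht : (s ^ d)⁻¹ = s ^ (-(d : ℝ)) := by rw [Real.rpow_neg hs.le, Real.rpow_natCast]
  have h := hμ.rpow_mul_measure_closedBall_le hp.le hq hψ hψc hψa x hs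
  rw [ht] at h
  have hrhs : (ENNReal.ofReal C * ENNReal.ofReal (s ^ (-(d : ℝ))) ^ p⁻¹ *
      eLpNorm ψ (ENNReal.ofReal p) volume) ^ q ≤ ENNReal.ofReal ((K * s ^ (-d / p)) ^ q) := by
    calc _ ≤ (ENNReal.ofReal K * ENNReal.ofReal (s ^ (-(d : ℝ))) ^ p⁻¹) ^ q := by
          rw [mul_right_comm]
          gcongr
      _ = _ := by
          rw [ENNReal.ofReal_rpow_of_pos (by positivity), ← ENNReal.ofReal_mul hK0,
            ENNReal.ofReal_rpow_of_nonneg (by positivity) hq.le, ← Real.rpow_mul hs.le,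
            div_eq_mul_inv]
  rw [ENNReal.ofReal_rpow_of_pos (by positivity), mul_comm,
    ← ENNReal.le_div_iff_mul_le (.inl (by simp; positivity)) (.inl ENNReal.ofReal_ne_top)] at h
  refine (h.trans (ENNReal.div_le_div_right hrhs _)).trans_eq ?_
  rw [← ENNReal.ofReal_div_of_pos (by positivity)]
  have hbase : K * s ^ (-d / p) / (s ^ (-(d : ℝ)) * a) = K / a * s ^ (d * (1 - p⁻¹)) := by
    rw [show (d : ℝ) * (1 - p⁻¹) = -d / p - -d by ring, Real.rpow_sub hs]
    field_simp
  rw [← Real.div_rpow (by positivity) (by positivity), hbase,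
    Real.mul_rpow (by positivity) (by positivity), ← Real.rpow_mul hs.le]

end HasRestriction

/-- If a Radon measure `μ` on `ℝ^d` admits `(p,q)` restriction with constant `C`, then
there is `M = M(d,p,q,C)` with `μ(B(x,r)) ≤ M r^{dq/p'}` for all `x` and `r > 0`. -/
theorem restriction_ball_growth (d : ℕ) (p q C : ℝ) (hp : 1 < p) (hq : 1 ≤ q) :
    ∃ M : ℝ, 0 < M ∧
      ∀ (μ : Measure (Euc d)), IsLocallyFiniteMeasure μ → HasRestriction μ p q C →
        ∀ (x : Euc d) (r : ℝ), 0 < r →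
          μ (closedBall x r) ≤ ENNReal.ofReal (M * r ^ ((d : ℝ) * q / (p / (p - 1)))) := by
  obtain ⟨ψ, hψ, hψc, a, ha, ε, hε, hψa⟩ :=
    exists_contDiff_hasCompactSupport_le_norm_fourier (V := Euc d)
  set N := eLpNorm ψ (ENNReal.ofReal p) volume
  have hN : N ≠ ⊤ := (hψ.continuous.memLp_of_hasCompactSupport hψc).eLpNorm_ne_top
  obtain ⟨K, hK0, hK⟩ : ∃ K : ℝ, 0 < K ∧ ENNReal.ofReal C * N ≤ ENNReal.ofReal K := by
    refine ⟨max C 1 * max N.toReal 1, by positivity, ?_⟩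
    rw [ENNReal.ofReal_mul (by positivity : (0 : ℝ) ≤ max C 1)]
    conv_lhs => rw [← ENNReal.ofReal_toReal hN]
    gcongr <;> apply le_max_left
  have hp1 : p - 1 ≠ 0 := by linarith
  have he : (d : ℝ) * (1 - p⁻¹) * q = d * q / (p / (p - 1)) := by field_simp
  refine ⟨(K / a) ^ q / ε ^ ((d : ℝ) * q / (p / (p - 1))), by positivity, fun μ _ hμ x r hr ↦ ?_⟩
  have h := hμ.measure_closedBall_le (by linarith) (by linarith) hψ hψc ha hψa hK0.le hK x
    (div_pos hr hε)
  rw [div_mul_cancel₀ r hε.ne', he, Real.div_rpow hr.le hε.le] at h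
  exact h.trans_eq (by ring_nf)

end
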